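/- Let v₁=(−1,0,0,0), v₂=(0,0,0,1), v₃=(0,1,0,0), v₄=(0,0,1,0), v₅=(1,0,0,0), v₆=(0,−1,−1,−1) in ℝ⁴. The polytope Δ* = conv{v₁,…,v₆} is reflexive: its polar dual (Δ*)* = { x ∈ ℝ⁴ : ⟨x, vᵢ⟩ ≥ −1 for i=1,…,6 } is a lattice polytope. -/
import Mathlib

set_option maxHeartbeats 1000000

private lemma cv5 {α : Type*} (a₀ a₁ a₂ a₃ a₄ a₅ a₆ a₇ : α) :
    ![a₀,a₁,a₂,a₃,a₄,a₅,a₆,a₇] 5 = a₅ := rfl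
private lemma cv6 {α : Type*} (a₀ a₁ a₂ a₃ a₄ a₅ a₆ a₇ : α) :
    ![a₀,a₁,a₂,a₃,a₄,a₅,a₆,a₇] 6 = a₆ := rfl
private lemma cv7 {α : Type*} (a₀ a₁ a₂ a₃ a₄ a₅ a₆ a₇ : α) :
    ![a₀,a₁,a₂,a₃,a₄,a₅,a₆,a₇] 7 = a₇ := rfl

/-- The polytope `Δ* = conv{(−1,0,0,0), (0,0,0,1), (0,1,0,0), (0,0,1,0), (1,0,0,0),
(0,−1,−1,−1)}` (the entry V(70) of the paper) is reflexive: its polar dual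
`{ x : ⟨x, vᵢ⟩ ≥ −1, i = 1,…,6 }` is a lattice polytope. -/
theorem V70_dual_is_lattice_polytope
    (v : Fin 6 → (Fin 4 → ℝ))
    (hv1 : v 0 = ![-1, 0, 0, 0]) (hv2 : v 1 = ![0, 0, 0, 1])
    (hv3 : v 2 = ![0, 1, 0, 0]) (hv4 : v 3 = ![0, 0, 1, 0])
    (hv5 : v 4 = ![1, 0, 0, 0]) (hv6 : v 5 = ![0, -1, -1, -1]) :
    ∃ S : Finset (Fin 4 → ℤ),
      {x : Fin 4 → ℝ | ∀ i : Fin 6, -1 ≤ ∑ j, x j * v i j}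
        = convexHull ℝ ((fun w : Fin 4 → ℤ => fun j => (w j : ℝ)) '' (S : Set (Fin 4 → ℤ))) := by
  classical
  refine ⟨{![1,-1,-1,-1], ![1,3,-1,-1], ![1,-1,3,-1], ![1,-1,-1,3],
           ![-1,-1,-1,-1], ![-1,3,-1,-1], ![-1,-1,3,-1], ![-1,-1,-1,3]}, ?_⟩
  apply Set.Subset.antisymm
  · -- hard direction: every point of the dual is a convex combination
    intro x hx
    have h0 := hx 0; rw [hv1] at h0
    have h1 := hx 1; rw [hv2] at h1
    have h2 := hx 2; rw [hv3] at h2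
    have h3 := hx 3; rw [hv4] at h3
    have h4 := hx 4; rw [hv5] at h4
    have h5 := hx 5; rw [hv6] at h5
    simp [Fin.sum_univ_four] at h0 h1 h2 h3 h4 h5
    obtain ⟨a, ha_def⟩ : ∃ a : ℝ, a = (1 - x 0)/2 := ⟨_, rfl⟩
    obtain ⟨b, hb_def⟩ : ∃ b : ℝ, b = (1 + x 0)/2 := ⟨_, rfl⟩
    obtain ⟨l0, hl0_def⟩ : ∃ c : ℝ, c = (1 - x 1 - x 2 - x 3)/4 := ⟨_, rfl⟩
    obtain ⟨l1, hl1_def⟩ : ∃ c : ℝ, c = (x 1 + 1)/4 := ⟨_, rfl⟩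
    obtain ⟨l2, hl2_def⟩ : ∃ c : ℝ, c = (x 2 + 1)/4 := ⟨_, rfl⟩
    obtain ⟨l3, hl3_def⟩ : ∃ c : ℝ, c = (x 3 + 1)/4 := ⟨_, rfl⟩
    have ha : 0 ≤ a := by rw [ha_def]; linarith
    have hb : 0 ≤ b := by rw [hb_def]; linarith
    have hl0 : 0 ≤ l0 := by rw [hl0_def]; linarith
    have hl1 : 0 ≤ l1 := by rw [hl1_def]; linarith
    have hl2 : 0 ≤ l2 := by rw [hl2_def]; linarith
    have hl3 : 0 ≤ l3 := by rw [hl3_def]; linarith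
    obtain ⟨w, hw_def⟩ : ∃ w : Fin 8 → ℝ,
        w = ![b*l0, b*l1, b*l2, b*l3, a*l0, a*l1, a*l2, a*l3] := ⟨_, rfl⟩
    obtain ⟨z, hz_def⟩ : ∃ z : Fin 8 → (Fin 4 → ℝ),
        z = ![![1,-1,-1,-1], ![1,3,-1,-1], ![1,-1,3,-1], ![1,-1,-1,3],
              ![-1,-1,-1,-1], ![-1,3,-1,-1], ![-1,-1,3,-1], ![-1,-1,-1,3]] := ⟨_, rfl⟩
    have hwsum : ∑ i, w i = 1 := by
      rw [hw_def]
      simp only [Fin.sum_univ_eight, Matrix.cons_val_zero, Matrix.cons_val_one,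
        Matrix.head_cons, Matrix.cons_val_two, Matrix.tail_cons, Matrix.cons_val_three,
        Matrix.cons_val_four, cv5, cv6, cv7]
      rw [ha_def, hb_def, hl0_def, hl1_def, hl2_def, hl3_def]; ring
    have hx_eq : Finset.univ.centerMass w z = x := by
      rw [Finset.centerMass, hwsum, inv_one, one_smul, hw_def, hz_def]
      funext j
      simp only [Finset.sum_apply, Pi.smul_apply, smul_eq_mul, Fin.sum_univ_eight,
        Matrix.cons_val_zero, Matrix.cons_val_one, Matrix.head_cons,
        Matrix.cons_val_two, Matrix.tail_cons, Matrix.cons_val_three,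
        Matrix.cons_val_four, cv5, cv6, cv7]
      rw [ha_def, hb_def, hl0_def, hl1_def, hl2_def, hl3_def]
      fin_cases j <;>
        · simp
          ring
    rw [← hx_eq]
    apply Finset.centerMass_mem_convexHull
    · intro i _
      rw [hw_def]
      fin_cases i
      exacts [mul_nonneg hb hl0, mul_nonneg hb hl1, mul_nonneg hb hl2, mul_nonneg hb hl3,
        mul_nonneg ha hl0, mul_nonneg ha hl1, mul_nonneg ha hl2, mul_nonneg ha hl3]
    · rw [hwsum]; norm_num
    · intro i _
      fin_cases i <;> rw [hz_def] <;>
        [ (exact ⟨![1,-1,-1,-1], by simp, by funext j; fin_cases j <;> norm_num⟩);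
          (exact ⟨![1,3,-1,-1], by simp, by funext j; fin_cases j <;> norm_num⟩);
          (exact ⟨![1,-1,3,-1], by simp, by funext j; fin_cases j <;> norm_num⟩);
          (exact ⟨![1,-1,-1,3], by simp, by funext j; fin_cases j <;> norm_num⟩);
          (exact ⟨![-1,-1,-1,-1], by simp, by funext j; fin_cases j <;> norm_num⟩);
          (exact ⟨![-1,3,-1,-1], by simp, by funext j; fin_cases j <;> norm_num⟩);
          (exact ⟨![-1,-1,3,-1], by simp, by funext j; fin_cases j <;> norm_num⟩);
          (exact ⟨![-1,-1,-1,3], by simp, by funext j; fin_cases j <;> norm_num⟩)]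
  · -- easy direction: convex hull contained in the convex dual
    apply convexHull_min
    · rintro y ⟨p, hp, rfl⟩
      simp only [Finset.coe_insert, Set.mem_insert_iff, Finset.coe_singleton,
        Set.mem_singleton_iff, Finset.mem_coe, Finset.mem_insert, Finset.mem_singleton] at hp
      intro i
      rcases hp with rfl | rfl | rfl | rfl | rfl | rfl | rfl | rfl <;>
        fin_cases i <;>
          simp [hv1, hv2, hv3, hv4, hv5, hv6, Fin.sum_univ_four] <;> norm_num
    · intro x hx y hy s t hs ht hst i
      have hxi := hx i
      have hyi := hy i
      have : ∑ j, (s • x + t • y) j * v i j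
          = s * ∑ j, x j * v i j + t * ∑ j, y j * v i j := by
        simp [Finset.mul_sum, add_mul, Finset.sum_add_distrib, mul_assoc]
      rw [this]
      nlinarith [mul_le_mul_of_nonneg_left hxi hs, mul_le_mul_of_nonneg_left hyi ht]
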